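/- Let I be a finite nonempty index set and let (X_i)_{i∈I} be independent real-valued random variables, X_i having finite fourth moment, mean μ_i and variance σ_i² > 0. For each i ∈ I let X_i^{(1)},…,X_i^{(R_i)} be i.i.d. copies of X_i with R_i ≥ 1, all mutually independent and independent of (X_i)_{i∈I}; set X̄_i = (1/R_i)Σ_k X_i^{(k)} and X̃_i = X_i − X̄_i, and define σ̄² = (1/|I|)Σ_{i∈I} σ_i² and γ² = ((1/|I|)Σ_{i∈I} σ_i⁴ − σ̄⁴)/σ̄⁴. Suppose Kurt(X̃_i) ≤ κ̃ for every i ∈ I. Then Σ_{i∈I} E[X̃_i⁴] / (Σ_{i∈I} Var(X̃_i))² ≤ 4·κ̃·(γ² + 1)/|I|. -/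

import Mathlib

open MeasureTheory ProbabilityTheory

/-- Kurtosis `E[(W − EW)⁴]/Var(W)²` of a real random variable. -/
noncomputable def kurt {Ω : Type*} [MeasurableSpace Ω] (P : Measure Ω) (W : Ω → ℝ) : ℝ :=
  (∫ ω, (W ω - ∫ ω', W ω' ∂P) ^ 4 ∂P) / (variance W P) ^ 2

/-- The Monte Carlo mean of `R` simulated realisations. -/
noncomputable def sampleMean {Ω : Type*} {R : ℕ} (Xc : Fin R → Ω → ℝ) (ω : Ω) : ℝ :=
  (R : ℝ)⁻¹ * ∑ k, Xc k ω

/-! Each prediction error `X̃_i = X_i - X̄_i` is centred, and independence of `X_i` from its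
copies gives `Var X̃_i = (1 + 1/R_i) σ_i² ∈ [σ_i², 2 σ_i²]`. Hence
`E X̃_i⁴ = Kurt(X̃_i) (Var X̃_i)² ≤ 4 κ̃ σ_i⁴`, so the ratio is at most `4 κ̃ Σ σ_i⁴ / (Σ σ_i²)²`,
and `Σ σ_i⁴ / (Σ σ_i²)² = (γ² + 1) / |I|` is the definition of `γ²` rearranged. -/

section

variable {Ω : Type*} [MeasurableSpace Ω] {P : Measure Ω}

lemma kurt_nonneg (P : Measure Ω) (W : Ω → ℝ) : 0 ≤ kurt P W :=
  div_nonneg (integral_nonneg fun ω => by positivity) (sq_nonneg _)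

lemma integral_pow_four_eq_kurt_mul {W : Ω → ℝ} (hW : ∫ ω, W ω ∂P = 0)
    (hv : variance W P ≠ 0) : ∫ ω, W ω ^ 4 ∂P = kurt P W * variance W P ^ 2 := by
  rw [kurt, div_mul_cancel₀ _ (pow_ne_zero 2 hv), hW]
  simp only [sub_zero]

lemma integral_pow_four_le_of_kurt_le {W : Ω → ℝ} {s κ : ℝ} (hW : ∫ ω, W ω ∂P = 0)
    (hv : 0 < variance W P) (hvs : variance W P ≤ 2 * s) (hκ : kurt P W ≤ κ) :
    ∫ ω, W ω ^ 4 ∂P ≤ 4 * κ * s ^ 2 := by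
  have hκ₀ : 0 ≤ κ := (kurt_nonneg P W).trans hκ
  calc ∫ ω, W ω ^ 4 ∂P = kurt P W * variance W P ^ 2 := integral_pow_four_eq_kurt_mul hW hv.ne'
    _ ≤ κ * (2 * s) ^ 2 := by gcongr
    _ = 4 * κ * s ^ 2 := by ring

variable {n : ℕ} {X : Ω → ℝ} {Y : Fin n → Ω → ℝ}

lemma integral_sampleMean (hn : n ≠ 0) (hX : Integrable X P)
    (hid : ∀ k, IdentDistrib (Y k) X P P) :
    ∫ ω, sampleMean Y ω ∂P = ∫ ω, X ω ∂P := by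
  have hY : ∀ k, Integrable (Y k) P := fun k => (hid k).symm.integrable_snd hX
  simp only [sampleMean]
  rw [integral_const_mul, integral_finsetSum _ fun k _ => hY k]
  simp [(hid _).integral_eq, hn]

lemma integral_sub_sampleMean (hn : n ≠ 0) (hX : Integrable X P)
    (hid : ∀ k, IdentDistrib (Y k) X P P) :
    ∫ ω, (X ω - sampleMean Y ω) ∂P = 0 := by
  have hY : Integrable (sampleMean Y) P :=
    (integrable_finsetSum _ fun k _ => (hid k).symm.integrable_snd hX).const_mul _
  rw [integral_sub hX hY, integral_sampleMean hn hX hid, sub_self]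

lemma variance_sub_sampleMean (hX : MemLp X 2 P) (hid : ∀ k, IdentDistrib (Y k) X P P)
    (hXY : IndepFun X (∑ k, Y k) P) (hY : Pairwise fun k l => IndepFun (Y k) (Y l) P) :
    variance (fun ω => X ω - sampleMean Y ω) P = (1 + (n : ℝ)⁻¹) * variance X P := by
  have hY₂ : ∀ k, MemLp (Y k) 2 P := fun k => (hid k).symm.memLp_snd hX
  have hvar_sum : variance (∑ k, Y k) P = n * variance X P := by
    rw [IndepFun.variance_sum (fun k _ => hY₂ k) fun k _ l _ hkl => hY hkl]
    simp [(hid _).variance_eq]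
  have hsplit : (fun ω => X ω - sampleMean Y ω) = X + (-(n : ℝ)⁻¹) • ∑ k, Y k := by
    ext ω
    simp only [sampleMean, Pi.add_apply, Pi.smul_apply, Finset.sum_apply, smul_eq_mul]
    ring
  rw [hsplit, IndepFun.variance_add hX ((memLp_finsetSum' _ fun k _ => hY₂ k).const_smul _)
    (hXY.comp measurable_id (measurable_const_smul _)), variance_smul, hvar_sum]
  rcases eq_or_ne n 0 with rfl | hn
  · simp
  · field_simp

lemma variance_le_variance_sub_sampleMean (hX : MemLp X 2 P)
    (hid : ∀ k, IdentDistrib (Y k) X P P) (hXY : IndepFun X (∑ k, Y k) P)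
    (hY : Pairwise fun k l => IndepFun (Y k) (Y l) P) :
    variance X P ≤ variance (fun ω => X ω - sampleMean Y ω) P := by
  rw [variance_sub_sampleMean hX hid hXY hY]
  exact le_mul_of_one_le_left (variance_nonneg _ _) (le_add_of_nonneg_right (by positivity))

lemma variance_sub_sampleMean_le_two_mul (hX : MemLp X 2 P)
    (hid : ∀ k, IdentDistrib (Y k) X P P) (hXY : IndepFun X (∑ k, Y k) P)
    (hY : Pairwise fun k l => IndepFun (Y k) (Y l) P) :
    variance (fun ω => X ω - sampleMean Y ω) P ≤ 2 * variance X P := by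
  rw [variance_sub_sampleMean hX hid hXY hY]
  have hn : (n : ℝ)⁻¹ ≤ 1 := Nat.cast_inv_le_one n
  exact mul_le_mul_of_nonneg_right (by linarith) (variance_nonneg _ _)

variable {ι : Type*} {κ : ι → Type*} {X : ι → Ω → ℝ}
  {Y : (i : ι) → κ i → Ω → ℝ}

lemma indepFun_sum_of_iIndepFun_sumElim [∀ i, Fintype (κ i)]
    (h : iIndepFun (β := fun _ => ℝ) (Sum.elim X fun p : Σ i, κ i => Y p.1 p.2) P)
    (hX : ∀ i, AEMeasurable (X i) P) (hY : ∀ i k, AEMeasurable (Y i k) P) (i : ι) :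
    IndepFun (X i) (∑ k, Y i k) P := by
  have hmeas : ∀ j, AEMeasurable (Sum.elim X (fun p : Σ i, κ i => Y p.1 p.2) j) P := by
    rintro (i | ⟨i, k⟩)
    exacts [hX i, hY i k]
  have hcopies : (Sum.inl i : ι ⊕ (Σ i, κ i)) ∉ Finset.univ.map
      ((Function.Embedding.sigmaMk i).trans Function.Embedding.inr) := by simp
  simpa using (h.indepFun_finsetSum_of_notMem₀ hmeas hcopies).symm

lemma pairwise_indepFun_of_iIndepFun_sumElim
    (h : iIndepFun (β := fun _ => ℝ) (Sum.elim X fun p : Σ i, κ i => Y p.1 p.2) P) (i : ι) :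
    Pairwise fun k l => IndepFun (Y i k) (Y i l) P := fun k l hkl =>
  h.indepFun (i := .inr ⟨i, k⟩) (j := .inr ⟨i, l⟩) (by simpa using hkl)

end

lemma div_sq_sum_le {ι : Type*} (s : Finset ι) {a v w : ι → ℝ} {c : ℝ} (hc : 0 ≤ c)
    (hw : 0 < ∑ i ∈ s, w i) (hwv : ∀ i ∈ s, w i ≤ v i) (ha : ∀ i ∈ s, a i ≤ c * w i ^ 2) :
    (∑ i ∈ s, a i) / (∑ i ∈ s, v i) ^ 2 ≤ c * (∑ i ∈ s, w i ^ 2) / (∑ i ∈ s, w i) ^ 2 := by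
  rw [Finset.mul_sum]
  exact div_le_div₀ (by positivity) (Finset.sum_le_sum ha) (by positivity)
    (by gcongr with i hi; exact hwv i hi)

theorem lyapunov_ratio_bound
    {Ω : Type*} [MeasurableSpace Ω] (P : Measure Ω) [IsProbabilityMeasure P]
    {I : Type*} [Fintype I] [Nonempty I]
    (X : I → Ω → ℝ) (R : I → ℕ) (hR : ∀ i, 1 ≤ R i)
    (Xc : (i : I) → Fin (R i) → Ω → ℝ)
    (hX4 : ∀ i, MemLp (X i) 4 P)
    (hXvar : ∀ i, 0 < variance (X i) P)
    -- the `X_i` and all the i.i.d. copies are mutually independent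
    (hIndep : iIndepFun (β := fun _ => ℝ)
      (fun j : I ⊕ (Σ i : I, Fin (R i)) =>
        match j with
        | .inl i => X i
        | .inr ⟨i, k⟩ => Xc i k) P)
    -- the copies are identically distributed with the originals
    (hid : ∀ i k, IdentDistrib (Xc i k) (X i) P P)
    -- average account-level variance and squared coefficient of variation of the variances
    (σbar2 : ℝ) (hσbar2 : σbar2 = (Fintype.card I : ℝ)⁻¹ * ∑ i, variance (X i) P)
    (γ2 : ℝ)
    (hγ2 : γ2 = ((Fintype.card I : ℝ)⁻¹ * ∑ i, (variance (X i) P) ^ 2 - σbar2 ^ 2) / σbar2 ^ 2)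
    -- uniform kurtosis bound on the prediction errors
    (κtilde : ℝ) (hκ : ∀ i, kurt P (fun ω => X i ω - sampleMean (Xc i) ω) ≤ κtilde) :
    (∑ i, ∫ ω, (X i ω - sampleMean (Xc i) ω) ^ 4 ∂P)
        / (∑ i, variance (fun ω => X i ω - sampleMean (Xc i) ω) P) ^ 2
      ≤ 4 * κtilde * (γ2 + 1) / (Fintype.card I : ℝ) := by
  have hX₂ : ∀ i, MemLp (X i) 2 P := fun i => (hX4 i).mono_exponent (by norm_num)
  replace hIndep :
      iIndepFun (β := fun _ => ℝ) (Sum.elim X fun p : Σ i, Fin (R i) => Xc p.1 p.2) P := by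
    convert hIndep using 1
    ext (i | ⟨i, k⟩) <;> rfl
  have hXY := indepFun_sum_of_iIndepFun_sumElim hIndep (fun i => (hX4 i).aemeasurable)
    fun i k => (hid i k).aemeasurable_fst
  have hYY := pairwise_indepFun_of_iIndepFun_sumElim hIndep
  have hvar_le : ∀ i, variance (X i) P ≤ variance (fun ω => X i ω - sampleMean (Xc i) ω) P :=
    fun i => variance_le_variance_sub_sampleMean (hX₂ i) (hid i) (hXY i) (hYY i)
  have hfourth : ∀ i, ∫ ω, (X i ω - sampleMean (Xc i) ω) ^ 4 ∂P
      ≤ 4 * κtilde * variance (X i) P ^ 2 := fun i =>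
    integral_pow_four_le_of_kurt_le
      (integral_sub_sampleMean (Nat.one_le_iff_ne_zero.mp (hR i)) ((hX₂ i).integrable one_le_two)
        (hid i))
      ((hXvar i).trans_le (hvar_le i))
      (variance_sub_sampleMean_le_two_mul (hX₂ i) (hid i) (hXY i) (hYY i)) (hκ i)
  have hκ₀ : 0 ≤ κtilde := (kurt_nonneg P _).trans (hκ (Classical.arbitrary I))
  have hσ : 0 < ∑ i, variance (X i) P := Finset.sum_pos (fun i _ => hXvar i) Finset.univ_nonempty
  calc _ ≤ 4 * κtilde * (∑ i, variance (X i) P ^ 2) / (∑ i, variance (X i) P) ^ 2 :=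
        div_sq_sum_le _ (by positivity) hσ (fun i _ => hvar_le i) (fun i _ => hfourth i)
    _ = _ := by
      rw [hγ2, hσbar2]
      field_simp
      ring
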